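/- Let x, y ∈ {0,1,…,N}^n. If there exists z ∈ ℕ^{n+K} with x ⤳ z and y ⤳ z, then there exists w ∈ {0,1,…,N}^{n+K} (i.e., a sequence all of whose entries are at most N) with x ⤳ w and y ⤳ w. Consequently, a code is a zero-error code for DTPC(N,K) if and only if it is a zero-error code for the channel DTPC(N,K;N) whose outputs are restricted to sequences with at most N particles per slot. -/

import Mathlib

/-- `Produces K x z`: the input sequence `x` (numbers of particles sent per slot) can
produce the output sequence `z` (of length `x.length + K`, numbers of particles received
per slot) through the channel DTPC(·, K): there are delays `d i j` (the number of
particles sent in slot `i` that are delayed by `j ∈ {0, …, K}` slots) accounting for all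
sent particles, such that the particles received in slot `t` are exactly those sent in
slot `i` and delayed by `j` slots with `i + j = t` (slots indexed from `0`). -/
def Produces (K : ℕ) (x z : List ℕ) : Prop :=
  z.length = x.length + K ∧
  ∃ d : ℕ → ℕ → ℕ,
    (∀ i < x.length, ∑ j ∈ Finset.range (K + 1), d i j = x.getD i 0) ∧
    (∀ t < x.length + K,
      z.getD t 0 =
        ∑ i ∈ Finset.range x.length, ∑ j ∈ Finset.range (K + 1),
          if i + j = t then d i j else 0)

/-- A code of length `n` for DTPC(N, K): a set of sequences over `{0, 1, …, N}` of length `n`. -/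
def IsCode (N n : ℕ) (C : Finset (List ℕ)) : Prop :=
  ∀ x ∈ C, x.length = n ∧ ∀ a ∈ x, a ≤ N

/-- Zero-error code for DTPC(N, K): for every `m ≥ 1`, no two distinct concatenations of
`m` codewords can produce the same channel output. -/
def IsZeroError (N K n : ℕ) (C : Finset (List ℕ)) : Prop :=
  IsCode N n C ∧
  ∀ L₁ L₂ : List (List ℕ),
    L₁.length = L₂.length → 1 ≤ L₁.length →
    (∀ w ∈ L₁, w ∈ C) → (∀ w ∈ L₂, w ∈ C) →
    L₁.flatten ≠ L₂.flatten →
    ∀ z : List ℕ, ¬ (Produces K L₁.flatten z ∧ Produces K L₂.flatten z)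

/-- Zero-padded code: every codeword ends with `min n K` zeros. -/
def IsZeroPadded (K n : ℕ) (C : Finset (List ℕ)) : Prop :=
  ∀ x ∈ C, List.replicate (min n K) 0 <:+ x

/-- Zero-error code for the restricted channel DTPC(N, K; N), whose outputs are
additionally required to have at most `N` particles per slot. -/
def IsZeroErrorRestricted (N K n : ℕ) (C : Finset (List ℕ)) : Prop :=
  IsCode N n C ∧
  ∀ L₁ L₂ : List (List ℕ),
    L₁.length = L₂.length → 1 ≤ L₁.length →
    (∀ w ∈ L₁, w ∈ C) → (∀ w ∈ L₂, w ∈ C) →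
    L₁.flatten ≠ L₂.flatten →
    ∀ z : List ℕ, ¬ ((Produces K L₁.flatten z ∧ ∀ a ∈ z, a ≤ N) ∧
      (Produces K L₂.flatten z ∧ ∀ a ∈ z, a ≤ N))


/-! Write `S_x t` for the number of particles sent before slot `t`. Particles arrive no earlier
than they are sent and at most `K` slots late, so any output `z` of `x` satisfies
`S_x (t - K) ≤ S_z t ≤ S_x t`; conversely every monotone `W` with `W t ≤ S_x t ≤ W (t + K)` is
the prefix-sum sequence of an output of `x`, realised by delivering the particles in the order
they were sent.

If `x` and `y` share an output `z`, then `S_x t ≤ S_z (t + K) ≤ S_y (t + K)` and symmetrically,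
so `W = min S_x S_y` satisfies the bounds for both inputs. Its increments are at most
`max (x t) (y t) ≤ N`. For codes, apply this to two concatenations of codewords. -/

open Finset

def prefixSum (x : List ℕ) (t : ℕ) : ℕ := ∑ i ∈ range t, x.getD i 0

lemma prefixSum_succ (x : List ℕ) (t : ℕ) : prefixSum x (t + 1) = prefixSum x t + x.getD t 0 :=
  sum_range_succ _ _

lemma prefixSum_mono (x : List ℕ) : Monotone (prefixSum x) := fun _ _ h =>
  sum_le_sum_of_subset (range_subset_range.2 h)

lemma prefixSum_min_length (x : List ℕ) (t : ℕ) :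
    prefixSum x (min t x.length) = prefixSum x t := by
  refine sum_subset (range_subset_range.2 (min_le_left _ _)) fun i hi hi' => ?_
  exact List.getD_eq_default _ _ (by rw [mem_range] at hi hi'; omega)

lemma List.getD_le_of_forall_le {x : List ℕ} {N : ℕ} (hx : ∀ a ∈ x, a ≤ N) (t : ℕ) :
    x.getD t 0 ≤ N := by
  rcases lt_or_ge t x.length with h | h
  · rw [List.getD_eq_getElem _ _ h]
    exact hx _ (List.getElem_mem h)
  · rw [List.getD_eq_default _ _ h]
    exact Nat.zero_le N

/-- The intervals `[g t, g (t + 1))` tile `[g l, g r)`, so their overlaps with `[a, b)` add up. -/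
lemma sum_Ico_min_sub_max {g : ℕ → ℕ} (hg : Monotone g) (a b : ℕ) {l r : ℕ} (hlr : l ≤ r) :
    ∑ t ∈ Ico l r, (min b (g (t + 1)) - max a (g t)) = min b (g r) - max a (g l) := by
  induction r, hlr using Nat.le_induction with
  | base => rw [Ico_self, sum_empty]; omega
  | succ r hlr ih =>
    rw [sum_Ico_succ_top hlr, ih]
    have := hg hlr
    have : g r ≤ g (r + 1) := hg r.le_succ
    omega

lemma sum_range_ite_add_eq {M : Type*} [AddCommMonoid M] (f : ℕ → M) (K i t : ℕ) :
    (∑ j ∈ range (K + 1), if i + j = t then f (i + j) else 0) =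
      if i ≤ t ∧ t ≤ i + K then f t else 0 := by
  split_ifs with h
  · rw [sum_eq_single_of_mem (t - i) (mem_range.2 (by omega)) fun j _ hj => if_neg (by omega),
      if_pos (by omega), Nat.add_sub_cancel' h.1]
  · exact sum_eq_zero fun j hj => if_neg (by rw [mem_range] at hj; omega)

section Delays

variable {K : ℕ} {x : List ℕ} {d : ℕ → ℕ → ℕ}

def arrivedBefore (K n : ℕ) (d : ℕ → ℕ → ℕ) (t : ℕ) : ℕ :=
  ∑ i ∈ range n, ∑ j ∈ range (K + 1), if i + j < t then d i j else 0

lemma arrivedBefore_le_prefixSum (hd : ∀ i < x.length, ∑ j ∈ range (K + 1), d i j = x.getD i 0)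
    (t : ℕ) : arrivedBefore K x.length d t ≤ prefixSum x t := by
  have sent : ∀ i ∈ range x.length, ∑ j ∈ range (K + 1), (if i + j < t then d i j else 0) ≤
      if i < t then x.getD i 0 else 0 := by
    intro i hi
    split_ifs with hit
    · rw [← hd i (mem_range.1 hi)]
      exact sum_le_sum fun j _ => by split <;> omega
    · exact (sum_eq_zero fun j _ => if_neg (by omega)).le
  calc arrivedBefore K x.length d t
      ≤ ∑ i ∈ range x.length, if i < t then x.getD i 0 else 0 := sum_le_sum sent
    _ = prefixSum x (min t x.length) := by
        rw [← sum_filter, prefixSum]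
        congr 1
        ext i
        simp [and_comm]
    _ = prefixSum x t := prefixSum_min_length x t

lemma prefixSum_sub_le_arrivedBefore
    (hd : ∀ i < x.length, ∑ j ∈ range (K + 1), d i j = x.getD i 0) {t : ℕ}
    (ht : t ≤ x.length + K) : prefixSum x (t - K) ≤ arrivedBefore K x.length d t := by
  have arrived : ∀ i ∈ range x.length, (if i + K < t then x.getD i 0 else 0) ≤
      ∑ j ∈ range (K + 1), if i + j < t then d i j else 0 := by
    intro i hi
    split_ifs with hit
    · rw [← hd i (mem_range.1 hi)]
      exact sum_le_sum fun j hj => by rw [if_pos (by rw [mem_range] at hj; omega)]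
    · exact Nat.zero_le _
  calc prefixSum x (t - K)
      = ∑ i ∈ range x.length, if i + K < t then x.getD i 0 else 0 := by
        rw [← sum_filter, prefixSum]
        congr 1
        ext i
        simp only [mem_range, mem_filter]
        omega
    _ ≤ arrivedBefore K x.length d t := sum_le_sum arrived

lemma prefixSum_eq_arrivedBefore {z : List ℕ} (hz : ∀ t < x.length + K, z.getD t 0 =
      ∑ i ∈ range x.length, ∑ j ∈ range (K + 1), if i + j = t then d i j else 0)
    {t : ℕ} (ht : t ≤ x.length + K) : prefixSum z t = arrivedBefore K x.length d t := by
  rw [prefixSum, sum_congr rfl fun s hs => hz s (by rw [mem_range] at hs; omega), sum_comm,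
    arrivedBefore]
  refine sum_congr rfl fun i _ => ?_
  rw [sum_comm]
  refine sum_congr rfl fun j _ => ?_
  rw [sum_ite_eq (range t) (i + j) fun _ => d i j]
  simp

end Delays

lemma Produces.prefixSum_bounds {K : ℕ} {x z : List ℕ} (h : Produces K x z) {t : ℕ}
    (ht : t ≤ x.length + K) :
    prefixSum x (t - K) ≤ prefixSum z t ∧ prefixSum z t ≤ prefixSum x t := by
  obtain ⟨-, d, hd, hz⟩ := h
  rw [prefixSum_eq_arrivedBefore hz ht]
  exact ⟨prefixSum_sub_le_arrivedBefore hd ht, arrivedBefore_le_prefixSum hd t⟩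

lemma Produces.prefixSum_le_prefixSum_add {K : ℕ} {u v z : List ℕ} (hlen : u.length = v.length)
    (hu : Produces K u z) (hv : Produces K v z) (t : ℕ) :
    prefixSum u t ≤ prefixSum v (t + K) := by
  set s := min t u.length with hs
  calc prefixSum u t = prefixSum u (s + K - K) := by rw [Nat.add_sub_cancel, prefixSum_min_length]
    _ ≤ prefixSum z (s + K) := (hu.prefixSum_bounds (by omega)).1
    _ ≤ prefixSum v (s + K) := (hv.prefixSum_bounds (by omega)).2
    _ ≤ prefixSum v (t + K) := prefixSum_mono v (by omega)

def increments (W : ℕ → ℕ) (m : ℕ) : List ℕ := (List.range m).map fun t => W (t + 1) - W t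

lemma increments_getD {W : ℕ → ℕ} {m t : ℕ} (ht : t < m) :
    (increments W m).getD t 0 = W (t + 1) - W t := by
  unfold increments
  rw [List.getD_eq_getElem _ _ (by simpa using ht)]
  simp

section Realization

variable {K : ℕ} {x : List ℕ} {W : ℕ → ℕ}

/-- Particle `k` of `x` (counted in sending order) is delivered in the slot `t` with
`W t ≤ k < W (t + 1)`; `overlapDelay x W i j` counts the particles of slot `i` delivered in
slot `i + j`. -/
def overlapDelay (x : List ℕ) (W : ℕ → ℕ) (i j : ℕ) : ℕ :=
  min (prefixSum x (i + 1)) (W (i + j + 1)) - max (prefixSum x i) (W (i + j))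

lemma sum_overlapDelay (hW : Monotone W) (hub : ∀ t, W t ≤ prefixSum x t)
    (hlb : ∀ t, prefixSum x t ≤ W (t + K)) (i : ℕ) :
    ∑ j ∈ range (K + 1), overlapDelay x W i j = x.getD i 0 := by
  have shift : ∑ j ∈ range (K + 1), overlapDelay x W i j =
      ∑ t ∈ Ico i (i + (K + 1)),
        (min (prefixSum x (i + 1)) (W (t + 1)) - max (prefixSum x i) (W t)) := by
    rw [sum_Ico_eq_sum_range]
    simp [overlapDelay]
  rw [shift, sum_Ico_min_sub_max hW _ _ (by omega)]
  have := hub i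
  have := hlb (i + 1)
  rw [add_right_comm, add_assoc] at this
  have := prefixSum_succ x i
  omega

lemma sum_sum_overlapDelay_eq (hW : Monotone W) (hub : ∀ t, W t ≤ prefixSum x t)
    (hlb : ∀ t, prefixSum x t ≤ W (t + K)) {t : ℕ} (ht : t < x.length + K) :
    ∑ i ∈ range x.length, ∑ j ∈ range (K + 1),
      (if i + j = t then overlapDelay x W i j else 0) = W (t + 1) - W t := by
  have slot : ∀ i, (∑ j ∈ range (K + 1), if i + j = t then overlapDelay x W i j else 0) =
      if i ≤ t ∧ t ≤ i + K then
        min (W (t + 1)) (prefixSum x (i + 1)) - max (W t) (prefixSum x i) else 0 := fun i => by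
    rw [← sum_range_ite_add_eq
      (fun s => min (W (s + 1)) (prefixSum x (i + 1)) - max (W s) (prefixSum x i))]
    simp only [overlapDelay, min_comm, max_comm]
  have senders : (range x.length).filter (fun i => i ≤ t ∧ t ≤ i + K) =
      Ico (t - K) (min (t + 1) x.length) := by
    ext i
    simp only [mem_filter, mem_range, mem_Ico]
    omega
  rw [sum_congr rfl fun i _ => slot i, ← sum_filter, senders,
    sum_Ico_min_sub_max (prefixSum_mono x) _ _ (by omega)]
  have : prefixSum x (t - K) ≤ W t := by
    rcases le_or_gt K t with h | h
    · simpa [Nat.sub_add_cancel h] using hlb (t - K)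
    · simp [Nat.sub_eq_zero_of_le h.le, prefixSum]
  have : W (t + 1) ≤ prefixSum x (min (t + 1) x.length) := by
    rw [prefixSum_min_length]
    exact hub (t + 1)
  have := hW t.le_succ
  omega

lemma produces_increments (hW : Monotone W) (hub : ∀ t, W t ≤ prefixSum x t)
    (hlb : ∀ t, prefixSum x t ≤ W (t + K)) : Produces K x (increments W (x.length + K)) :=
  ⟨by simp [increments], overlapDelay x W, fun i _ => sum_overlapDelay hW hub hlb i,
    fun t ht => by rw [increments_getD ht, sum_sum_overlapDelay_eq hW hub hlb ht]⟩

end Realization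

theorem exists_common_output_le {N K : ℕ} {x y z : List ℕ} (hxy : x.length = y.length)
    (hx : ∀ a ∈ x, a ≤ N) (hy : ∀ a ∈ y, a ≤ N) (hzx : Produces K x z) (hzy : Produces K y z) :
    ∃ w : List ℕ, (∀ a ∈ w, a ≤ N) ∧ Produces K x w ∧ Produces K y w := by
  let W t := min (prefixSum x t) (prefixSum y t)
  have hW : Monotone W := (prefixSum_mono x).min (prefixSum_mono y)
  have hxW : ∀ t, prefixSum x t ≤ W (t + K) := fun t =>
    le_min (prefixSum_mono x (Nat.le_add_right t K)) (hzx.prefixSum_le_prefixSum_add hxy hzy t)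
  have hyW : ∀ t, prefixSum y t ≤ W (t + K) := fun t =>
    le_min (hzy.prefixSum_le_prefixSum_add hxy.symm hzx t) (prefixSum_mono y (Nat.le_add_right t K))
  refine ⟨increments W (x.length + K), ?_, produces_increments hW (fun t => min_le_left _ _) hxW,
    hxy ▸ produces_increments hW (fun t => min_le_right _ _) hyW⟩
  simp only [increments, List.mem_map, List.mem_range]
  rintro _ ⟨t, -, rfl⟩
  have := prefixSum_succ x t
  have := prefixSum_succ y t
  have := List.getD_le_of_forall_le hx t
  have := List.getD_le_of_forall_le hy t
  change min (prefixSum x (t + 1)) (prefixSum y (t + 1)) - min (prefixSum x t) (prefixSum y t) ≤ N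
  omega

namespace IsCode

variable {N n : ℕ} {C : Finset (List ℕ)} {L : List (List ℕ)}

lemma length_flatten (hC : IsCode N n C) (hL : ∀ w ∈ L, w ∈ C) :
    L.flatten.length = L.length * n := by
  rw [List.length_flatten, List.map_congr_left fun w hw => (hC w (hL w hw)).1, List.map_const',
    List.sum_replicate, smul_eq_mul]

lemma le_of_mem_flatten (hC : IsCode N n C) (hL : ∀ w ∈ L, w ∈ C) :
    ∀ a ∈ L.flatten, a ≤ N := fun a ha => by
  obtain ⟨w, hw, haw⟩ := List.mem_flatten.1 ha
  exact (hC w (hL w hw)).2 a haw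

end IsCode

theorem restricting_output_preserves_zero_error_general (N K : ℕ) :
    (∀ n : ℕ, ∀ x y : List ℕ, x.length = n → y.length = n →
      (∀ a ∈ x, a ≤ N) → (∀ a ∈ y, a ≤ N) →
      (∃ z : List ℕ, Produces K x z ∧ Produces K y z) →
      ∃ w : List ℕ, (∀ a ∈ w, a ≤ N) ∧ Produces K x w ∧ Produces K y w) ∧
    ∀ n : ℕ, ∀ C : Finset (List ℕ),
      (IsZeroError N K n C ↔ IsZeroErrorRestricted N K n C) := by
  refine ⟨fun n x y hx hy hxN hyN ⟨z, hzx, hzy⟩ =>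
    exists_common_output_le (hx.trans hy.symm) hxN hyN hzx hzy, fun n C => ⟨fun h => ⟨h.1, ?_⟩,
    fun h => ⟨h.1, ?_⟩⟩⟩
  · exact fun L₁ L₂ hlen hm h₁ h₂ hne z hz => h.2 L₁ L₂ hlen hm h₁ h₂ hne z ⟨hz.1.1, hz.2.1⟩
  · rintro L₁ L₂ hlen hm h₁ h₂ hne z ⟨hz₁, hz₂⟩
    obtain ⟨w, hwN, hw₁, hw₂⟩ := exists_common_output_le
      (by rw [h.1.length_flatten h₁, h.1.length_flatten h₂, hlen])
      (h.1.le_of_mem_flatten h₁) (h.1.le_of_mem_flatten h₂) hz₁ hz₂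
    exact h.2 L₁ L₂ hlen hm h₁ h₂ hne w ⟨⟨hw₁, hwN⟩, hw₂, hwN⟩

/-- If two input sequences over `{0, …, N}` can produce a common output through
DTPC(N, K), then they can produce a common output all of whose entries are at most `N`.
Consequently, a code is zero-error for DTPC(N, K) iff it is zero-error for the
restricted channel DTPC(N, K; N). -/
theorem restricting_output_preserves_zero_error (N K : ℕ) (hN : 1 ≤ N) :
    (∀ n : ℕ, ∀ x y : List ℕ, x.length = n → y.length = n →
      (∀ a ∈ x, a ≤ N) → (∀ a ∈ y, a ≤ N) →
      (∃ z : List ℕ, Produces K x z ∧ Produces K y z) →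
      ∃ w : List ℕ, (∀ a ∈ w, a ≤ N) ∧ Produces K x w ∧ Produces K y w) ∧
    ∀ n : ℕ, ∀ C : Finset (List ℕ),
      (IsZeroError N K n C ↔ IsZeroErrorRestricted N K n C) :=
  restricting_output_preserves_zero_error_general N K
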